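/- Let T1 = T(r1, s1) and T2 = T(r2, s2) be equivalent trees, where r1 ≤ s1 and r2 ≤ s2 are nonnegative rationals. If every rational number in the interval [r2, s2] appears in T2, then every rational number in the interval [r1, s1] appears in T1. -/

import Mathlib

/-!
Write `v z = ![num z, den z]`, so that `gcd • v (mediant p q) = v p + v q` with `gcd` the
reduction factor of the mediant. Let `A` and `B` be the integer matrices with rows `v s1, v r1`
and `v s2, v r2`, and `N = adj A * B`; then `v r1 ᵥ* N = det A • v r2` and
`v s1 ᵥ* N = det A • v s2`. As equivalent trees divide by the same factor at every position,
this relation propagates to all corresponding entries `e, e'` of the two trees: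
`v e ᵥ* N = det A • v e'`. For `x ∈ [r1, s1]` the Cramer coordinates `v x ᵥ* adj A` are
nonnegative, so `v x ᵥ* N` is a positive multiple of `v y` for some `y ∈ [r2, s2]`. That `y`
occurs in `T(r2, s2)`, and since `N` is nonsingular the entry of `T(r1, s1)` at the same
position is `x`.

If `r2 = s2`, the leftmost reduction factor of `T(r2, s2)` is always `2`, which makes
`det (v r1, v s1)` divisible by every power of `2`; hence `r1 = s1`.
-/

/-- The mediant of two rationals `p` and `q`: `(num p + num q) / (den p + den q)`. -/
def mediant (p q : ℚ) : ℚ := ((p.num + q.num : ℤ) : ℚ) / ((p.den + q.den : ℕ) : ℚ)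

/-- Insert between every pair of consecutive entries of a list their mediant. -/
def insertMediants : List ℚ → List ℚ
  | [] => []
  | [p] => [p]
  | p :: q :: rest => p :: mediant p q :: insertMediants (q :: rest)

/-- The sequences of the tree `T(r, s)`: `S r s 0 = [r, s]`, and each successive
sequence is obtained by inserting mediants between consecutive entries. -/
def S (r s : ℚ) : ℕ → List ℚ
  | 0 => [r, s]
  | n + 1 => insertMediants (S r s n)


/-- Two trees `T(r1, s1)` and `T(r2, s2)` are equivalent if the mediant inserted at each
position reduces by exactly the same factor in both trees: for every row `n` and every
`j`-th consecutive pair `(p, q)` of `S r1 s1 n` and `(p', q')` of `S r2 s2 n`,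
`gcd (num p + num q) (den p + den q) = gcd (num p' + num q') (den p' + den q')`. -/
def TreesEquiv (r1 s1 r2 s2 : ℚ) : Prop :=
  ∀ n j, (h1 : j + 1 < (S r1 s1 n).length) → (h2 : j + 1 < (S r2 s2 n).length) →
    Int.gcd ((S r1 s1 n)[j].num + (S r1 s1 n)[j + 1].num)
            (((S r1 s1 n)[j].den : ℤ) + ((S r1 s1 n)[j + 1].den : ℤ)) =
    Int.gcd ((S r2 s2 n)[j].num + (S r2 s2 n)[j + 1].num)
            (((S r2 s2 n)[j].den : ℤ) + ((S r2 s2 n)[j + 1].den : ℤ))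

open Matrix

theorem Matrix.row_vecMul_adjugate_mul {n R : Type*} [Fintype n] [DecidableEq n] [CommRing R]
    (A B : Matrix n n R) (i : n) : A i ᵥ* (adjugate A * B) = A.det • B i := by
  rw [← A.row_apply', ← single_one_vecMul, vecMul_vecMul, ← Matrix.mul_assoc, mul_adjugate,
    Matrix.smul_mul, Matrix.one_mul, vecMul_smul, single_one_vecMul, row_apply']

theorem Matrix.vecMul_adjugate_vecMul {n R : Type*} [Fintype n] [DecidableEq n] [CommRing R]
    (v : n → R) (A : Matrix n n R) : (v ᵥ* adjugate A) ᵥ* A = A.det • v := by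
  rw [vecMul_vecMul, adjugate_mul, vecMul_smul, vecMul_one]

def numDen (z : ℚ) : Fin 2 → ℤ := ![z.num, z.den]

theorem Rat.gcd_num_den (q : ℚ) : Int.gcd q.num q.den = 1 := by
  simpa [Int.gcd] using q.reduced

theorem eq_of_smul_numDen_eq_smul {x y : ℚ} {a b : ℤ} (ha : a ≠ 0)
    (h : a • numDen x = b • numDen y) : x = y := by
  have hnum := congrFun h 0
  have hden := congrFun h 1
  simp only [numDen, Pi.smul_apply, Matrix.cons_val_zero, Matrix.cons_val_one,
    smul_eq_mul] at hnum hden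
  rw [Rat.eq_iff_mul_eq_mul]
  refine mul_left_cancel₀ ha ?_
  linear_combination (y.den : ℤ) * hnum - y.num * hden

theorem gcd_smul_numDen_div (u w : ℤ) (hw : 0 < w) :
    (Int.gcd u w : ℤ) • numDen (u / w) = ![u, w] := by
  obtain ⟨c, hu, hw'⟩ := Rat.exists_eq_mul_div_num_and_eq_mul_div_den u hw.ne'
  set q : ℚ := u / w
  have hc : 0 < c := pos_of_mul_pos_left (hw' ▸ hw) (by positivity)
  have hgcd : (Int.gcd u w : ℤ) = c := by
    rw [hu, hw', Int.gcd_mul_left, q.gcd_num_den, mul_one, Int.natAbs_of_nonneg hc.le]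
  rw [hgcd]
  ext i
  fin_cases i
  · simpa [numDen] using hu.symm
  · simpa [numDen] using hw'.symm

def mediantGcd (p q : ℚ) : ℕ := Int.gcd (p.num + q.num) ((p.den : ℤ) + (q.den : ℤ))

theorem mediantGcd_pos (p q : ℚ) : 0 < mediantGcd p q :=
  Int.gcd_pos_of_ne_zero_right _ (by positivity)

theorem mediantGcd_smul_numDen_mediant (p q : ℚ) :
    (mediantGcd p q : ℤ) • numDen (mediant p q) = numDen p + numDen q := by
  have h := gcd_smul_numDen_div (p.num + q.num) ((p.den : ℤ) + (q.den : ℤ)) (by positivity)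
  rw [mediant, show ((p.den + q.den : ℕ) : ℚ) = (((p.den : ℤ) + (q.den : ℤ) : ℤ) : ℚ) by
    push_cast; rfl]
  rw [mediantGcd, h]
  ext i
  fin_cases i <;> simp [numDen]

theorem mediant_self (c : ℚ) : mediant c c = c := by
  rw [mediant, ← two_mul, ← two_mul]
  push_cast
  rw [mul_div_mul_left _ _ two_ne_zero, Rat.num_div_den]

theorem mediantGcd_self (c : ℚ) : mediantGcd c c = 2 := by
  rw [mediantGcd, ← two_mul, ← two_mul, Int.gcd_mul_left, c.gcd_num_den]
  rfl

theorem length_insertMediants : ∀ L : List ℚ, (insertMediants L).length = 2 * L.length - 1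
  | [] => rfl
  | [_] => rfl
  | p :: q :: rest => by
    have ih := length_insertMediants (q :: rest)
    simp only [insertMediants, List.length_cons] at ih ⊢
    omega

theorem getElem_insertMediants_two_mul : ∀ (L : List ℚ) (k : ℕ) (hk : k < L.length)
    (h : 2 * k < (insertMediants L).length), (insertMediants L)[2 * k] = L[k]
  | [_], 0, _, _ => rfl
  | _ :: _ :: _, 0, _, _ => rfl
  | p :: q :: rest, k + 1, hk, h => by
    simp only [insertMediants, List.length_cons] at hk h
    simp only [insertMediants, Nat.mul_succ, List.getElem_cons_succ]
    exact getElem_insertMediants_two_mul (q :: rest) k (by simpa using hk) (by omega)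

theorem getElem_insertMediants_two_mul_add_one :
    ∀ (L : List ℚ) (k : ℕ) (hk : k + 1 < L.length) (h : 2 * k + 1 < (insertMediants L).length),
    (insertMediants L)[2 * k + 1] = mediant L[k] L[k + 1]
  | _ :: _ :: _, 0, _, _ => rfl
  | p :: q :: rest, k + 1, hk, h => by
    simp only [insertMediants, List.length_cons] at hk h
    simp only [insertMediants, Nat.mul_succ, List.getElem_cons_succ]
    exact getElem_insertMediants_two_mul_add_one (q :: rest) k (by simpa using hk) (by omega)

theorem insertMediants_replicate (c : ℚ) :
    ∀ k, insertMediants (List.replicate (k + 1) c) = List.replicate (2 * k + 1) c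
  | 0 => rfl
  | k + 1 => by
    rw [List.replicate_succ, List.replicate_succ, insertMediants, ← List.replicate_succ,
      insertMediants_replicate c k, mediant_self]
    rfl

theorem length_S (r s : ℚ) (n : ℕ) : (S r s n).length = 2 ^ n + 1 := by
  induction n with
  | zero => rfl
  | succ n ih =>
    rw [S, length_insertMediants, ih, pow_succ]
    omega

theorem S_self (c : ℚ) (n : ℕ) : S c c n = List.replicate (2 ^ n + 1) c := by
  induction n with
  | zero => rfl
  | succ n ih =>
    rw [S, ih, insertMediants_replicate, pow_succ, mul_comm]

theorem TreesEquiv.numDen_vecMul {r1 s1 r2 s2 : ℚ} (h : TreesEquiv r1 s1 r2 s2)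
    {N : Matrix (Fin 2) (Fin 2) ℤ} {t : ℤ}
    (hr : numDen r1 ᵥ* N = t • numDen r2) (hs : numDen s1 ᵥ* N = t • numDen s2) (n j : ℕ)
    (h1 : j < (S r1 s1 n).length) (h2 : j < (S r2 s2 n).length) :
    numDen (S r1 s1 n)[j] ᵥ* N = t • numDen (S r2 s2 n)[j] := by
  induction n generalizing j with
  | zero =>
    have hj : j < 2 := h1
    interval_cases j
    exacts [hr, hs]
  | succ n ih =>
    have hl1 := length_S r1 s1 n
    have hl2 := length_S r2 s2 n
    simp only [length_S, pow_succ] at h1 h2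
    obtain ⟨k, rfl | rfl⟩ := Nat.even_or_odd' j
    · simp only [S]
      rw [getElem_insertMediants_two_mul _ k (by omega),
        getElem_insertMediants_two_mul _ k (by omega)]
      exact ih k (by omega) (by omega)
    · simp only [S]
      rw [getElem_insertMediants_two_mul_add_one _ k (by omega),
        getElem_insertMediants_two_mul_add_one _ k (by omega)]
      have hg : mediantGcd (S r1 s1 n)[k] (S r1 s1 n)[k + 1] =
          mediantGcd (S r2 s2 n)[k] (S r2 s2 n)[k + 1] := h n k (by omega) (by omega)
      refine smul_right_injective (Fin 2 → ℤ)
        (Int.natCast_ne_zero.mpr (mediantGcd_pos (S r1 s1 n)[k] (S r1 s1 n)[k + 1]).ne') ?_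
      dsimp only
      rw [← smul_vecMul, mediantGcd_smul_numDen_mediant, add_vecMul, ih k (by omega) (by omega),
        ih (k + 1) (by omega) (by omega), smul_comm, hg, mediantGcd_smul_numDen_mediant, smul_add]

def numDenMatrix (p q : ℚ) : Matrix (Fin 2) (Fin 2) ℤ := Matrix.of ![numDen p, numDen q]

theorem det_numDenMatrix (p q : ℚ) :
    (numDenMatrix p q).det = p.num * q.den - q.num * p.den := by
  simp [numDenMatrix, numDen, Matrix.det_fin_two]
  ring

theorem det_numDenMatrix_eq_zero_iff {p q : ℚ} : (numDenMatrix p q).det = 0 ↔ p = q := by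
  rw [det_numDenMatrix, sub_eq_zero]
  exact Rat.eq_iff_mul_eq_mul.symm

theorem det_numDenMatrix_nonneg_iff {p q : ℚ} : 0 ≤ (numDenMatrix p q).det ↔ q ≤ p := by
  rw [det_numDenMatrix, sub_nonneg, Rat.le_iff]

theorem mediantGcd_mul_det_numDenMatrix_mediant (p q : ℚ) :
    mediantGcd p q * (numDenMatrix p (mediant p q)).det = (numDenMatrix p q).det := by
  have h := mediantGcd_smul_numDen_mediant p q
  have hnum := congrFun h 0
  have hden := congrFun h 1
  simp only [numDen, Pi.smul_apply, Pi.add_apply, Matrix.cons_val_zero, Matrix.cons_val_one,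
    smul_eq_mul] at hnum hden
  rw [det_numDenMatrix, det_numDenMatrix]
  linear_combination (p.num : ℤ) * hden - (p.den : ℤ) * hnum

theorem vecMul_numDenMatrix (v : Fin 2 → ℤ) (p q : ℚ) :
    v ᵥ* numDenMatrix p q = v 0 • numDen p + v 1 • numDen q := by
  ext i
  fin_cases i <;> simp [numDenMatrix, numDen, vecMul, dotProduct, Fin.sum_univ_two]

theorem numDen_vecMul_adjugate_numDenMatrix (x p q : ℚ) :
    numDen x ᵥ* adjugate (numDenMatrix p q) =
      ![(numDenMatrix x q).det, (numDenMatrix p x).det] := by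
  rw [det_numDenMatrix, det_numDenMatrix]
  ext i
  fin_cases i <;> simp [numDenMatrix, numDen, adjugate_fin_two, vecMul, dotProduct,
    Fin.sum_univ_two] <;> ring

theorem smul_numDen_add_smul_numDen_one_pos {p q : ℚ} {a b : ℤ} (ha : 0 ≤ a) (hb : 0 ≤ b)
    (hab : a ≠ 0 ∨ b ≠ 0) : 0 < (a • numDen p + b • numDen q) 1 := by
  simp only [numDen, Pi.add_apply, Pi.smul_apply, Matrix.cons_val_one, Matrix.cons_val_zero,
    smul_eq_mul]
  rcases hab with hab | hab
  · exact add_pos_of_pos_of_nonneg (mul_pos (by omega) (by positivity)) (by positivity)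
  · exact add_pos_of_nonneg_of_pos (by positivity) (mul_pos (by omega) (by positivity))

theorem mem_Icc_of_smul_numDen_eq {p q y : ℚ} (hpq : p ≤ q) {a b g : ℤ} (ha : 0 ≤ a)
    (hb : 0 ≤ b) (hg : 0 < g) (h : g • numDen y = a • numDen p + b • numDen q) :
    y ∈ Set.Icc p q := by
  have hnum := congrFun h 0
  have hden := congrFun h 1
  simp only [numDen, Pi.smul_apply, Pi.add_apply, Matrix.cons_val_zero, Matrix.cons_val_one,
    smul_eq_mul] at hnum hden
  rw [Rat.le_iff] at hpq
  constructor <;> rw [Rat.le_iff] <;> refine le_of_mul_le_mul_left ?_ hg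
  · linear_combination b * hpq + (p.num : ℤ) * hden - (p.den : ℤ) * hnum
  · linear_combination a * hpq - (q.num : ℤ) * hden + (q.den : ℤ) * hnum

theorem one_lt_length_S (r s : ℚ) (n : ℕ) : 1 < (S r s n).length := by
  rw [length_S]
  exact Nat.lt_add_of_pos_left (Nat.two_pow_pos n)

theorem TreesEquiv.eq_of_self {r s c : ℚ} (h : TreesEquiv r s c c) : r = s := by
  have hlen := one_lt_length_S r s
  have hdet (n : ℕ) : 2 ^ n * (numDenMatrix ((S r s n)[0]'(one_pos.trans (hlen n)))
      ((S r s n)[1]'(hlen n))).det =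
      (numDenMatrix r s).det := by
    induction n with
    | zero => rw [pow_zero, one_mul]; rfl
    | succ n ih =>
      have hl := hlen n
      have hl' := one_lt_length_S c c n
      have hg : mediantGcd (S r s n)[0] (S r s n)[1] = mediantGcd (S c c n)[0] (S c c n)[1] :=
        h n 0 hl hl'
      simp only [S_self, List.getElem_replicate, mediantGcd_self] at hg
      have := mediantGcd_mul_det_numDenMatrix_mediant (S r s n)[0] (S r s n)[1]
      rw [hg] at this
      simp only [S]
      rw [getElem_insertMediants_two_mul _ 0 (by omega),
        getElem_insertMediants_two_mul_add_one _ 0 (by omega), ← ih, pow_succ]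
      push_cast at this
      linear_combination (2 : ℤ) ^ n * this
  rw [← det_numDenMatrix_eq_zero_iff]
  set D := (numDenMatrix r s).det
  refine Int.eq_zero_of_dvd_of_natAbs_lt_natAbs (d := 2 ^ D.natAbs) ⟨_, (hdet _).symm⟩ ?_
  rw [Int.natAbs_pow]
  exact Nat.lt_two_pow_self

theorem exists_mem_Icc_numDen_vecMul_eq_smul {r1 s1 r2 s2 x : ℚ} (h1 : r1 ≠ s1) (h2 : r2 ≤ s2)
    (hx1 : r1 ≤ x) (hx2 : x ≤ s1) : ∃ y ∈ Set.Icc r2 s2, ∃ g : ℤ,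
      numDen x ᵥ* (adjugate (numDenMatrix s1 r1) * numDenMatrix s2 r2) = g • numDen y := by
  set A := numDenMatrix s1 r1
  have hA : A.det ≠ 0 := det_numDenMatrix_eq_zero_iff.not.mpr h1.symm
  set w := numDen x ᵥ* adjugate A
  have hw : w = ![(numDenMatrix x r1).det, (numDenMatrix s1 x).det] :=
    numDen_vecMul_adjugate_numDenMatrix x s1 r1
  have hw0 : 0 ≤ w 0 := by rw [hw]; exact det_numDenMatrix_nonneg_iff.mpr hx1
  have hw1 : 0 ≤ w 1 := by rw [hw]; exact det_numDenMatrix_nonneg_iff.mpr hx2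
  have hw_ne : w 0 ≠ 0 ∨ w 1 ≠ 0 := by
    have hx : w 0 • numDen s1 + w 1 • numDen r1 = A.det • numDen x := by
      rw [← vecMul_numDenMatrix, vecMul_adjugate_vecMul]
    by_contra! hw
    rw [hw.1, hw.2, zero_smul, zero_smul, add_zero] at hx
    have := congrFun hx 1
    simp [numDen, hA, x.den_ne_zero] at this
  set u := numDen x ᵥ* (adjugate A * numDenMatrix s2 r2)
  have hu : u = w 1 • numDen r2 + w 0 • numDen s2 := by
    rw [add_comm, ← vecMul_numDenMatrix, vecMul_vecMul]
  have hu1 : 0 < u 1 := hu ▸ smul_numDen_add_smul_numDen_one_pos hw1 hw0 hw_ne.symm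
  have hy : (Int.gcd (u 0) (u 1) : ℤ) • numDen (u 0 / u 1) = u := by
    rw [gcd_smul_numDen_div _ _ hu1]
    ext i
    fin_cases i <;> rfl
  refine ⟨u 0 / u 1, ?_, _, hy.symm⟩
  exact mem_Icc_of_smul_numDen_eq h2 hw1 hw0
    (Int.natCast_pos.mpr (Int.gcd_pos_of_ne_zero_right _ hu1.ne')) (hy.trans hu)

theorem TreesEquiv.exists_mem_S {r1 s1 r2 s2 : ℚ} (h : TreesEquiv r1 s1 r2 s2) (h1 : r1 ≠ s1)
    (h2 : r2 < s2) (hT2 : ∀ y : ℚ, r2 ≤ y → y ≤ s2 → ∃ n, y ∈ S r2 s2 n) {x : ℚ}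
    (hx1 : r1 ≤ x) (hx2 : x ≤ s1) : ∃ n, x ∈ S r1 s1 n := by
  set A := numDenMatrix s1 r1
  set N := adjugate A * numDenMatrix s2 r2
  have hA : A.det ≠ 0 := det_numDenMatrix_eq_zero_iff.not.mpr h1.symm
  have hN : N.det ≠ 0 := by
    rw [det_mul, det_adjugate, Fintype.card_fin, pow_one]
    exact mul_ne_zero hA (det_numDenMatrix_eq_zero_iff.not.mpr h2.ne')
  obtain ⟨y, hy_mem, g, hy⟩ := exists_mem_Icc_numDen_vecMul_eq_smul h1 h2.le hx1 hx2
  obtain ⟨n, hn⟩ := hT2 y hy_mem.1 hy_mem.2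
  obtain ⟨j, hj2, rfl⟩ := List.getElem_of_mem hn
  have hj1 : j < (S r1 s1 n).length := by rwa [length_S, ← length_S r2 s2]
  have hr : numDen r1 ᵥ* N = A.det • numDen r2 := row_vecMul_adjugate_mul A _ 1
  have hs : numDen s1 ᵥ* N = A.det • numDen s2 := row_vecMul_adjugate_mul A _ 0
  have he := h.numDen_vecMul hr hs n j hj1 hj2
  refine ⟨n, ?_⟩
  convert List.getElem_mem hj1
  refine eq_of_smul_numDen_eq_smul hA (b := g) ?_
  refine sub_eq_zero.mp (eq_zero_of_vecMul_eq_zero hN ?_)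
  rw [sub_vecMul, smul_vecMul, smul_vecMul, he, hy, smul_comm, sub_self]

theorem equiv_trees_appears_general (r1 s1 r2 s2 : ℚ)
    (hrs2 : r2 ≤ s2)
    (hequiv : TreesEquiv r1 s1 r2 s2)
    (hT2 : ∀ x : ℚ, r2 ≤ x → x ≤ s2 → ∃ n, x ∈ S r2 s2 n) :
    ∀ x : ℚ, r1 ≤ x → x ≤ s1 → ∃ n, x ∈ S r1 s1 n := by
  intro x hx1 hx2
  by_cases h1 : r1 = s1
  · exact ⟨0, by simp [S, le_antisymm (h1 ▸ hx2) hx1]⟩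
  rcases hrs2.eq_or_lt with rfl | h2
  · exact absurd hequiv.eq_of_self h1
  exact hequiv.exists_mem_S h1 h2 hT2 hx1 hx2

/-- If `T(r1, s1)` and `T(r2, s2)` are equivalent trees and every rational in `[r2, s2]`
appears in `T(r2, s2)`, then every rational in `[r1, s1]` appears in `T(r1, s1)`. -/
theorem equiv_trees_appears (r1 s1 r2 s2 : ℚ)
    (hr1 : 0 ≤ r1) (hrs1 : r1 ≤ s1) (hr2 : 0 ≤ r2) (hrs2 : r2 ≤ s2)
    (hequiv : TreesEquiv r1 s1 r2 s2)
    (hT2 : ∀ x : ℚ, r2 ≤ x → x ≤ s2 → ∃ n, x ∈ S r2 s2 n) :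
    ∀ x : ℚ, r1 ≤ x → x ≤ s1 → ∃ n, x ∈ S r1 s1 n :=
  equiv_trees_appears_general r1 s1 r2 s2 hrs2 hequiv hT2
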